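/- arXiv:2112.08756 — 4 statements merged into one kernel-verified Lean document; each statement's English description precedes it below -/
import Mathlib

section
/- Let N ≥ 2 and c ∈ [0,1]. Then the minimum of (∏_{i=1}^N η_i)^{1/N} over all η ∈ [0,1]^N satisfying (1/N) Σ_{i=1}^N (1 − η_i) = c equals max(1 − Nc, 0)^{1/N}. Moreover, if 0 ≤ c < 1/N, then η attains this minimum if and only if there is an index i with η_i = 1 − Nc and η_j = 1 for all j ≠ i. -/
/-!
Writing `η i = 1 - a i`, the Weierstrass product inequality `∏ (1 - a i) ≥ 1 - ∑ a i` for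
`a i ∈ [0,1]` bounds the product from below by `1 - N c`, and the bound `0` is trivial.
Both bounds are attained by vaccinating groups one after the other to the full.
Peeling off a factor `η i < 1`, the inequality is strict as soon as another factor is `< 1`,
so for `N c < 1` the minimizers are exactly the strategies with at most one `η i < 1`.
-/

open Finset

section WeierstrassProduct

variable {ι : Type*} {η : ι → ℝ}

theorem one_sub_sum_le_prod (s : Finset ι) (hη : ∀ i ∈ s, η i ∈ Set.Icc (0 : ℝ) 1) :
    1 - ∑ i ∈ s, (1 - η i) ≤ ∏ i ∈ s, η i := by
  induction s using Finset.cons_induction with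
  | empty => simp
  | cons a s _ ih =>
    rw [prod_cons, sum_cons]
    obtain ⟨ha0, ha1⟩ := hη a (mem_cons_self a s)
    have ih := ih fun i hi => hη i (mem_cons_of_mem hi)
    have hT : 0 ≤ ∑ i ∈ s, (1 - η i) :=
      sum_nonneg fun i hi => sub_nonneg.2 (hη i (mem_cons_of_mem hi)).2
    nlinarith

theorem one_sub_sum_lt_prod [DecidableEq ι] {s : Finset ι} {i j : ι}
    (hη : ∀ k ∈ s, η k ∈ Set.Icc (0 : ℝ) 1) (hi : i ∈ s) (hj : j ∈ s) (hji : j ≠ i)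
    (hηi : η i < 1) (hηj : η j < 1) :
    1 - ∑ k ∈ s, (1 - η k) < ∏ k ∈ s, η k := by
  have hη' : ∀ k ∈ s.erase i, η k ∈ Set.Icc (0 : ℝ) 1 :=
    fun k hk => hη k (mem_of_mem_erase hk)
  have hT : 0 < ∑ k ∈ s.erase i, (1 - η k) :=
    sum_pos' (fun k hk => sub_nonneg.2 (hη' k hk).2)
      ⟨j, mem_erase.2 ⟨hji, hj⟩, by linarith⟩
  have hP := one_sub_sum_le_prod (s.erase i) hη'
  rw [← mul_prod_erase s η hi, ← add_sum_erase s (fun k => 1 - η k) hi]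
  -- `η i * P ≥ η i * (1 - T) > η i - T`, the last step strict because `η i < 1` and `T > 0`
  nlinarith [mul_le_mul_of_nonneg_left hP (hη i hi).1, mul_pos (sub_pos.2 hηi) hT]

theorem sum_one_sub_eq_of_forall_ne [Fintype ι] {i : ι} (h : ∀ j, j ≠ i → η j = 1) :
    ∑ j, (1 - η j) = 1 - η i :=
  sum_eq_single i (fun j _ hj => by rw [h j hj, sub_self]) (absurd (mem_univ i))

theorem prod_eq_of_forall_ne [Fintype ι] {i : ι} (h : ∀ j, j ≠ i → η j = 1) :
    ∏ j, η j = η i :=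
  prod_eq_single i (fun j _ hj => h j hj) (absurd (mem_univ i))

theorem prod_eq_one_sub_sum_iff [Fintype ι] [Nonempty ι]
    (hη : ∀ i, η i ∈ Set.Icc (0 : ℝ) 1) :
    ∏ i, η i = 1 - ∑ i, (1 - η i) ↔ ∃ i, ∀ j, j ≠ i → η j = 1 := by
  classical
  constructor
  · intro heq
    by_contra! hmany
    obtain ⟨i⟩ := ‹Nonempty ι›
    obtain ⟨j, hji, hηj⟩ := hmany i
    obtain ⟨k, hkj, hηk⟩ := hmany j
    have hlt := one_sub_sum_lt_prod (fun k _ => hη k) (mem_univ j) (mem_univ k) hkj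
      (lt_of_le_of_ne (hη j).2 hηj) (lt_of_le_of_ne (hη k).2 hηk)
    linarith
  · rintro ⟨i, hi⟩
    rw [prod_eq_of_forall_ne hi, sum_one_sub_eq_of_forall_ne hi, sub_sub_cancel]

end WeierstrassProduct

theorem exists_Icc_sum_one_sub_eq_prod_eq_max (N : ℕ) {s : ℝ} (hs0 : 0 ≤ s) (hsN : s ≤ N) :
    ∃ η : Fin N → ℝ, (∀ i, η i ∈ Set.Icc (0 : ℝ) 1) ∧
      ∑ i, (1 - η i) = s ∧ ∏ i, η i = max (1 - s) 0 := by
  induction N generalizing s with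
  | zero =>
    obtain rfl : s = 0 := le_antisymm (by simpa using hsN) hs0
    exact ⟨fun _ => 1, by simp, by simp, by simp⟩
  | succ n ih =>
    by_cases hs1 : s ≤ 1
    · refine ⟨Fin.cons (1 - s) fun _ => 1, Fin.cases ?mem (by simp), ?sum, by simpa using hs1⟩
      case mem => simpa using ⟨hs1, hs0⟩
      case sum => rw [Fin.sum_univ_succ]; simp
    · rw [not_le] at hs1
      obtain ⟨η, hη, hsum, -⟩ := ih (s := s - 1) (by linarith) (by push_cast at hsN; linarith)
      refine ⟨Fin.cons 0 η, Fin.cases (by simp) hη, ?_, ?_⟩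
      · rw [Fin.sum_univ_succ, Fin.cons_zero]
        simp only [Fin.cons_succ, hsum]
        ring
      · simp [Fin.prod_univ_succ, max_eq_right (by linarith : 1 - s ≤ 0)]

/-- For the fully asymmetric circle model with `N` equal groups, the minimum of the
effective reproduction number `(∏ i, η i) ^ (1/N)` over all strategies `η ∈ [0,1]^N`
of cost `c = (1/N) ∑ i (1 - η i)` equals `max (1 - N c) 0 ^ (1/N)`; moreover, for
`0 ≤ c < 1/N`, the minimizers are exactly the strategies giving all the vaccine to a
single group. -/
theorem stmt1 (N : ℕ) (hN : 2 ≤ N) (c : ℝ) (hc : c ∈ Set.Icc (0 : ℝ) 1) :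
    IsLeast
      {r : ℝ | ∃ η : Fin N → ℝ, (∀ i, η i ∈ Set.Icc (0 : ℝ) 1) ∧
        (1 / N : ℝ) * ∑ i, (1 - η i) = c ∧ r = (∏ i, η i) ^ ((1 : ℝ) / N)}
      (max (1 - N * c) 0 ^ ((1 : ℝ) / N)) ∧
    (c < 1 / N →
      ∀ η : Fin N → ℝ, (∀ i, η i ∈ Set.Icc (0 : ℝ) 1) →
        (1 / N : ℝ) * ∑ i, (1 - η i) = c →
        ((∏ i, η i) ^ ((1 : ℝ) / N) = max (1 - N * c) 0 ^ ((1 : ℝ) / N) ↔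
          ∃ i, η i = 1 - N * c ∧ ∀ j, j ≠ i → η j = 1)) := by
  have hN0 : (0 : ℝ) < N := by exact_mod_cast (by omega : 0 < N)
  have hcost (η : Fin N → ℝ) :
      (1 / N : ℝ) * ∑ i, (1 - η i) = c ↔ ∑ i, (1 - η i) = N * c := by
    field_simp
  refine ⟨⟨?_, ?_⟩, ?_⟩
  · obtain ⟨η, hη, hsum, hprod⟩ :=
      exists_Icc_sum_one_sub_eq_prod_eq_max N (mul_nonneg hN0.le hc.1) (by nlinarith [hc.2])
    exact ⟨η, hη, (hcost η).2 hsum, by rw [hprod]⟩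
  · rintro r ⟨η, hη, hsum, rfl⟩
    have hlower := one_sub_sum_le_prod univ fun i _ => hη i
    rw [(hcost η).1 hsum] at hlower
    exact Real.rpow_le_rpow (le_max_right _ _)
      (max_le hlower (prod_nonneg fun i _ => (hη i).1)) (by positivity)
  · intro hcN η hη hsum
    rw [hcost] at hsum
    have hNc : 0 ≤ 1 - N * c := by rw [lt_div_iff₀ hN0] at hcN; linarith
    have : Nonempty (Fin N) := ⟨⟨0, by omega⟩⟩
    rw [max_eq_left hNc, Real.rpow_left_inj (prod_nonneg fun i _ => (hη i).1) hNc (by positivity),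
      ← hsum, prod_eq_one_sub_sum_iff hη]
    refine exists_congr fun i => ⟨fun hi => ⟨?_, hi⟩, And.right⟩
    rw [sum_one_sub_eq_of_forall_ne hi, sub_sub_cancel]
end

section
/- Let N ≥ 3 and let K be the N × N adjacency matrix of the cycle: K_{ij} = 1 if j ≡ i ± 1 (mod N) and K_{ij} = 0 otherwise. (a) If η ∈ [0,1]^N satisfies Σ_{i=1}^N (1 − η_i) < ⌈N/2⌉, then the spectral radius of K·Diag(η) is strictly positive. (b) If η′ ∈ {0,1}^N is defined by η′_i = 1 when i is even and η′_i = 0 when i is odd (indices 1, …, N), then (K·Diag(η′))² = 0, hence the spectral radius of K·Diag(η′) is 0. Consequently, the minimal cost (1/N) Σ_i (1 − η_i) of a strategy η ∈ [0,1]^N with spectral radius of K·Diag(η) equal to 0 is ⌈N/2⌉/N. -/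
/-- The spectral radius of a real square matrix: the maximum of the moduli of its
complex eigenvalues. -/
noncomputable def matrixSpecRad {N : ℕ} (A : Matrix (Fin N) (Fin N) ℝ) : ℝ :=
  sSup ((fun z : ℂ => ‖z‖) '' spectrum ℂ (A.map Complex.ofReal))

/-!
Every index with `η i = 0` contributes `1` to the cost, so a cost below `⌈N/2⌉` leaves more than
`N/2` indices with `η i > 0`, and two of them are cyclically adjacent, say `i` and `i + 1`. Then
`M = K · Diag(η)` is entrywise nonnegative with `M i (i+1) * M (i+1) i > 0`, so `trace (M²) > 0`.
Since `trace (M²)` is the sum of the squares of the eigenvalues, some eigenvalue is nonzero.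
Conversely `η'` is supported on the odd indices, an independent set of the cycle, so every path
of length two in `K · Diag(η')` passes through a zero weight and `(K · Diag(η'))² = 0`.
-/

open Finset Matrix

theorem spectrum_subset_zero_of_isNilpotent {K A : Type*} [Field K] [Ring A] [Algebra K A]
    {a : A} (ha : IsNilpotent a) : spectrum K a ⊆ {0} := by
  obtain ⟨k, hk⟩ := ha
  intro μ hμ
  have hμk : μ ^ k ∈ spectrum K (a ^ k) := spectrum.pow_image_subset a k ⟨μ, hμ, rfl⟩
  rcases subsingleton_or_nontrivial A with _ | _
  · simp [spectrum.of_subsingleton] at hμ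
  · rw [hk, spectrum.zero_eq] at hμk
    exact IsNilpotent.eq_zero ⟨k, hμk⟩

theorem Matrix.trace_eq_zero_of_spectrum_subset_zero {n K : Type*} [Fintype n] [DecidableEq n]
    [Field K] [IsAlgClosed K] {A : Matrix n n K} (hA : spectrum K A ⊆ {0}) : A.trace = 0 := by
  rw [trace_eq_sum_roots_charpoly]
  exact Multiset.sum_eq_zero fun r hr ↦
    hA (mem_spectrum_of_isRoot_charpoly (Polynomial.isRoot_of_mem_roots hr))

theorem Matrix.trace_sq_pos_of_nonneg {n R : Type*} [Fintype n] [DecidableEq n] [CommSemiring R]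
    [PartialOrder R] [IsStrictOrderedRing R] {M : Matrix n n R} (hM : ∀ i j, 0 ≤ M i j) {i j : n}
    (hij : 0 < M i j) (hji : 0 < M j i) : 0 < (M ^ 2).trace := by
  have hdiag : ∀ k, 0 ≤ (M ^ 2) k k := fun k ↦ by
    rw [sq, mul_apply]; exact sum_nonneg fun l _ ↦ mul_nonneg (hM k l) (hM l k)
  have hi : 0 < (M ^ 2) i i := by
    rw [sq, mul_apply]
    exact sum_pos' (fun l _ ↦ mul_nonneg (hM i l) (hM l i)) ⟨j, mem_univ _, mul_pos hij hji⟩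
  exact sum_pos' (fun k _ ↦ hdiag k) ⟨i, mem_univ _, hi⟩

theorem Matrix.mul_diagonal_sq_eq_zero {n R : Type*} [Fintype n] [DecidableEq n] [Semiring R]
    {M : Matrix n n R} {η : n → R} (h : ∀ k l, η k ≠ 0 → η l ≠ 0 → M k l = 0) :
    (M * diagonal η) ^ 2 = 0 := by
  ext a b
  rw [sq, mul_apply, zero_apply]
  refine sum_eq_zero fun k _ ↦ ?_
  simp only [mul_diagonal]
  by_cases hk : η k = 0
  · simp [hk]
  by_cases hb : η b = 0
  · simp [hb]
  simp [h k b hk hb]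

theorem exists_mem_add_mem_of_card_lt_two_mul {G : Type*} [AddGroup G] [Fintype G]
    [DecidableEq G] {S : Finset G} (hS : Fintype.card G < 2 * #S) (g : G) : ∃ i ∈ S, i + g ∈ S := by
  obtain ⟨x, hx⟩ := inter_nonempty_of_card_lt_card_add_card (subset_univ S)
    (subset_univ (S.map (Equiv.subRight g).toEmbedding)) (by simpa [two_mul] using hS)
  simp only [mem_inter, mem_map_equiv] at hx
  exact ⟨x, hx.1, by simpa using hx.2⟩

theorem card_filter_eq_zero_le_sum_one_sub {ι : Type*} [Fintype ι] {η : ι → ℝ}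
    (hη : ∀ i, η i ≤ 1) : (#{i | η i = 0} : ℝ) ≤ ∑ i, (1 - η i) := by
  calc (#{i | η i = 0} : ℝ) = ∑ i with η i = 0, (1 - η i) := by
        rw [card_eq_sum_ones, Nat.cast_sum, Nat.cast_one]
        exact sum_congr rfl fun i hi ↦ by simp [(mem_filter.mp hi).2]
    _ ≤ ∑ i, (1 - η i) :=
        sum_le_sum_of_subset_of_nonneg (subset_univ _) fun i _ _ ↦ sub_nonneg.mpr (hη i)

theorem Nat.ceil_natCast_div_two {α : Type*} [Field α] [LinearOrder α] [IsStrictOrderedRing α]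
    [FloorSemiring α] (n : ℕ) : ⌈(n : α) / 2⌉₊ = (n + 1) / 2 := by
  have h₁ : (n : α) ≤ 2 * ⌈(n : α) / 2⌉₊ := by
    have := Nat.le_ceil ((n : α) / 2); linarith
  have h₂ : 2 * (⌈(n : α) / 2⌉₊ : α) < n + 2 := by
    have := Nat.ceil_lt_add_one (by positivity : (0 : α) ≤ n / 2); linarith
  have h₁' : n ≤ 2 * ⌈(n : α) / 2⌉₊ := by exact_mod_cast h₁
  have h₂' : 2 * ⌈(n : α) / 2⌉₊ < n + 2 := by exact_mod_cast h₂
  omega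

theorem Nat.card_filter_range_even (n : ℕ) : #{i ∈ range n | Even i} = (n + 1) / 2 := by
  induction n with
  | zero => rfl
  | succ n ih =>
    rw [range_add_one, filter_insert]
    split_ifs with h
    · rw [card_insert_of_notMem (by simp), ih]; grind
    · rw [ih]; grind

theorem matrixSpecRad_eq_zero_of_isNilpotent {N : ℕ} {A : Matrix (Fin N) (Fin N) ℝ}
    (hA : IsNilpotent A) : matrixSpecRad A = 0 := by
  have h0 := spectrum_subset_zero_of_isNilpotent (K := ℂ) (hA.map Complex.ofRealHom.mapMatrix)
  apply le_antisymm
  · exact Real.sSup_nonpos <| by rintro _ ⟨z, hz, rfl⟩; simp [Set.mem_singleton_iff.mp (h0 hz)]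
  · exact Real.sSup_nonneg <| by rintro _ ⟨z, -, rfl⟩; exact norm_nonneg z

theorem spectrum_subset_zero_of_matrixSpecRad_nonpos {N : ℕ} {A : Matrix (Fin N) (Fin N) ℝ}
    (hA : matrixSpecRad A ≤ 0) : spectrum ℂ (A.map Complex.ofReal) ⊆ {0} := fun z hz ↦
  norm_le_zero_iff.mp <|
    (le_csSup ((finite_spectrum _).image _).bddAbove ⟨z, hz, rfl⟩).trans hA

theorem matrixSpecRad_pos_of_trace_sq_pos {N : ℕ} {A : Matrix (Fin N) (Fin N) ℝ}
    (hA : 0 < (A ^ 2).trace) : 0 < matrixSpecRad A := by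
  by_contra! hρ
  have hsq : spectrum ℂ ((A ^ 2).map Complex.ofRealHom) ⊆ {0} := by
    rw [Matrix.map_pow, spectrum.map_pow_of_pos _ two_pos]
    rintro _ ⟨z, hz, rfl⟩
    simp [Set.mem_singleton_iff.mp (spectrum_subset_zero_of_matrixSpecRad_nonpos hρ hz)]
  have htr := trace_eq_zero_of_spectrum_subset_zero hsq
  rw [← AddMonoidHom.map_trace, Complex.ofRealHom_eq_coe, Complex.ofReal_eq_zero] at htr
  exact hA.ne' htr

def cycleAdjMatrix (N : ℕ) : Matrix (Fin N) (Fin N) ℝ :=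
  of fun i j ↦ if (j : ℕ) = ((i : ℕ) + 1) % N ∨ ((j : ℕ) + 1) % N = (i : ℕ) then 1 else 0

namespace cycleAdjMatrix

variable {N : ℕ}

theorem nonneg (i j : Fin N) : 0 ≤ cycleAdjMatrix N i j := by
  rw [cycleAdjMatrix, of_apply]; split_ifs <;> norm_num

theorem apply_add_one [NeZero N] (i : Fin N) : cycleAdjMatrix N i (i + 1) = 1 := by
  simp [cycleAdjMatrix, Fin.val_add]

theorem add_one_apply [NeZero N] (i : Fin N) : cycleAdjMatrix N (i + 1) i = 1 := by
  simp [cycleAdjMatrix, Fin.val_add]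

theorem apply_eq_zero_of_odd {k l : Fin N} (hk : Odd (k : ℕ)) (hl : Odd (l : ℕ)) :
    cycleAdjMatrix N k l = 0 := by
  have hsucc : ∀ a b : Fin N, Odd (a : ℕ) → Odd (b : ℕ) → (b : ℕ) ≠ ((a : ℕ) + 1) % N := by
    intro a b ha hb h
    rw [Nat.odd_iff] at ha hb
    rcases Nat.lt_or_ge (a + 1) N with haN | haN
    · rw [Nat.mod_eq_of_lt haN] at h; omega
    · rw [show (a : ℕ) + 1 = N by omega, Nat.mod_self] at h; omega
  rw [cycleAdjMatrix, of_apply, if_neg]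
  rintro (h | h)
  exacts [hsucc k l hk hl h, hsucc l k hl hk h.symm]

end cycleAdjMatrix

theorem matrixSpecRad_cycleAdjMatrix_mul_diagonal_pos {N : ℕ} {η : Fin N → ℝ}
    (hη : ∀ i, η i ∈ Set.Icc 0 1) (hcost : ∑ i, (1 - η i) < ((N + 1) / 2 : ℕ)) :
    0 < matrixSpecRad (cycleAdjMatrix N * diagonal η) := by
  set S : Finset (Fin N) := {i | η i ≠ 0}
  have hS : N < 2 * #S := by
    have hzero : #{i | η i = 0} < (N + 1) / 2 := by
      exact_mod_cast (card_filter_eq_zero_le_sum_one_sub fun i ↦ (hη i).2).trans_lt hcost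
    have hsplit : #{i | η i = 0} + #S = N := by
      simpa using card_filter_add_card_filter_not (s := univ) fun i ↦ η i = 0
    omega
  obtain ⟨i₀, -⟩ := card_pos.mp (by omega : 0 < #S)
  have : NeZero N := NeZero.of_pos i₀.pos
  obtain ⟨i, hi, hi'⟩ := exists_mem_add_mem_of_card_lt_two_mul (by simpa using hS) (1 : Fin N)
  have hpos : ∀ j ∈ S, 0 < η j := fun j hj ↦ (hη j).1.lt_of_ne' (mem_filter.mp hj).2
  refine matrixSpecRad_pos_of_trace_sq_pos (trace_sq_pos_of_nonneg (i := i) (j := i + 1) ?_ ?_ ?_)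
  · intro a b; rw [mul_diagonal]; exact mul_nonneg (cycleAdjMatrix.nonneg a b) (hη b).1
  · rw [mul_diagonal, cycleAdjMatrix.apply_add_one, one_mul]; exact hpos _ hi'
  · rw [mul_diagonal, cycleAdjMatrix.add_one_apply, one_mul]; exact hpos _ hi

theorem sum_one_sub_eq_of_eq_ite_odd {N : ℕ} {η : Fin N → ℝ}
    (hη : ∀ i, η i = if ((i : ℕ) + 1) % 2 = 0 then 1 else 0) :
    ∑ i, (1 - η i) = ((N + 1) / 2 : ℕ) := by
  have hone_sub : ∀ i : Fin N, 1 - η i = if Even (i : ℕ) then 1 else 0 := fun i ↦ by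
    rw [hη]; split_ifs <;> grind
  simp_rw [hone_sub]
  rw [Fin.sum_univ_eq_sum_range (fun i ↦ if Even i then (1 : ℝ) else 0), sum_boole,
    Nat.card_filter_range_even]

theorem stmt3_general (N : ℕ) (K : Matrix (Fin N) (Fin N) ℝ)
    (hK : ∀ i j, K i j =
      if (j : ℕ) = ((i : ℕ) + 1) % N ∨ ((j : ℕ) + 1) % N = (i : ℕ) then 1 else 0)
    (η' : Fin N → ℝ) (hη' : ∀ i, η' i = if ((i : ℕ) + 1) % 2 = 0 then 1 else 0) :
    (∀ η : Fin N → ℝ, (∀ i, η i ∈ Set.Icc (0 : ℝ) 1) →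
      (∑ i, (1 - η i)) < (⌈(N : ℝ) / 2⌉₊ : ℝ) →
      0 < matrixSpecRad (K * Matrix.diagonal η)) ∧
    ((K * Matrix.diagonal η') ^ 2 = 0 ∧ matrixSpecRad (K * Matrix.diagonal η') = 0) ∧
    IsLeast
      {c : ℝ | ∃ η : Fin N → ℝ, (∀ i, η i ∈ Set.Icc (0 : ℝ) 1) ∧
        matrixSpecRad (K * Matrix.diagonal η) = 0 ∧
        c = (1 / N : ℝ) * ∑ i, (1 - η i)}
      ((⌈(N : ℝ) / 2⌉₊ : ℝ) / N) := by
  obtain rfl : K = cycleAdjMatrix N := Matrix.ext hK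
  rw [Nat.ceil_natCast_div_two]
  have hpos : ∀ η : Fin N → ℝ, (∀ i, η i ∈ Set.Icc (0 : ℝ) 1) →
      ∑ i, (1 - η i) < ((N + 1) / 2 : ℕ) → 0 < matrixSpecRad (cycleAdjMatrix N * diagonal η) :=
    fun _ ↦ matrixSpecRad_cycleAdjMatrix_mul_diagonal_pos
  have hodd : ∀ i, η' i ≠ 0 → Odd (i : ℕ) := fun i hi ↦ by
    rw [hη'] at hi; split_ifs at hi with h
    · exact Nat.odd_iff.mpr (by omega)
    · exact absurd rfl hi
  have hsq : (cycleAdjMatrix N * diagonal η') ^ 2 = 0 := mul_diagonal_sq_eq_zero fun k l hk hl ↦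
    cycleAdjMatrix.apply_eq_zero_of_odd (hodd k hk) (hodd l hl)
  have hρ := matrixSpecRad_eq_zero_of_isNilpotent ⟨2, hsq⟩
  refine ⟨hpos, ⟨hsq, hρ⟩, ⟨η', fun i ↦ ?_, hρ, ?_⟩, ?_⟩
  · rw [hη']; split_ifs <;> norm_num
  · rw [sum_one_sub_eq_of_eq_ite_odd hη']; ring
  · rintro c ⟨η, hη, hρη, rfl⟩
    have hcost : (((N + 1) / 2 : ℕ) : ℝ) ≤ ∑ i, (1 - η i) :=
      not_lt.mp fun h ↦ (hpos η hη h).ne' hρη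
    rw [div_eq_inv_mul, one_div]
    gcongr

/-- For the fully symmetric circle model on `N ≥ 3` groups (labels `1, …, N`, encoded by
`i : Fin N ↦` label `i+1`):
(a) any strategy with `∑ (1 - η i) < ⌈N/2⌉` has positive effective reproduction number;
(b) the strategy vaccinating exactly the odd-labelled groups makes `K·Diag(η')` nilpotent of
order 2, hence has zero effective reproduction number;
consequently the minimal cost of a strategy stopping transmission is `⌈N/2⌉/N`. -/
theorem stmt3 (N : ℕ) (hN : 3 ≤ N) (K : Matrix (Fin N) (Fin N) ℝ)
    (hK : ∀ i j, K i j =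
      if (j : ℕ) = ((i : ℕ) + 1) % N ∨ ((j : ℕ) + 1) % N = (i : ℕ) then 1 else 0)
    (η' : Fin N → ℝ) (hη' : ∀ i, η' i = if ((i : ℕ) + 1) % 2 = 0 then 1 else 0) :
    (∀ η : Fin N → ℝ, (∀ i, η i ∈ Set.Icc (0 : ℝ) 1) →
      (∑ i, (1 - η i)) < (⌈(N : ℝ) / 2⌉₊ : ℝ) →
      0 < matrixSpecRad (K * Matrix.diagonal η)) ∧
    ((K * Matrix.diagonal η') ^ 2 = 0 ∧ matrixSpecRad (K * Matrix.diagonal η') = 0) ∧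
    IsLeast
      {c : ℝ | ∃ η : Fin N → ℝ, (∀ i, η i ∈ Set.Icc (0 : ℝ) 1) ∧
        matrixSpecRad (K * Matrix.diagonal η) = 0 ∧
        c = (1 / N : ℝ) * ∑ i, (1 - η i)}
      ((⌈(N : ℝ) / 2⌉₊ : ℝ) / N) :=
  stmt3_general N K hK η' hη'
end

section
/- Let n ≥ 1 and μ_1 ≥ μ_2 ≥ ⋯ ≥ μ_n > 0. Let β ∈ [0, n) and α ∈ [0, μ_1], and define ξ^v ∈ ℝ^n by ξ^v_i = μ_i · min(1, max(β + 1 − i, 0)) and ξ^h ∈ ℝ^n by ξ^h_i = min(α, μ_i). Then for every ξ ∈ [0, μ_1] × ⋯ × [0, μ_n]: if Σ_{i=1}^n ξ_i = Σ_{i=1}^n ξ^v_i then ξ ≺ ξ^v, and if Σ_{i=1}^n ξ_i = Σ_{i=1}^n ξ^h_i then ξ^h ≺ ξ. -/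
/-!
Both halves are exchange arguments between index sets of equal size.

Fix `m`. If `β ≤ m`, the vertical profile vanishes beyond its first `m` entries, so these carry
its whole mass, which bounds the sum of any `m` entries of the nonnegative `ξ`. If `m < β`, the
vertical profile agrees with `μ` on its first `m` entries, and since `μ` is nonincreasing and
`ξ ≤ μ`, no `m` entries of `ξ` sum to more than the first `m` entries of `μ`.

For the horizontal profile take a set `s` of `m` largest entries of `ξ`. If all of them are at
least `α`, they dominate any `m` entries of `min(α, μ)`. Otherwise every entry of `ξ` off `s` is
below both `α` and `μ`, hence below `min(α, μ)`; so the mass of `ξ` off `s` is at most the mass of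
the horizontal profile off any `m`-set, and equal totals turn this around.
-/

/-- The sum of the `m` largest entries of `ξ ∈ ℝ^n`, expressed as the supremum of the
sums of `ξ` over subsets of cardinality `m`. -/
noncomputable def topSum {n : ℕ} (ξ : Fin n → ℝ) (m : ℕ) : ℝ :=
  sSup ((fun s : Finset (Fin n) => ∑ i ∈ s, ξ i) '' {s | s.card = m})

/-- `ξ` is majorized by `χ`: for every `m`, the sum of the `m` largest entries of `ξ`
is at most the sum of the `m` largest entries of `χ`, and the total sums agree. -/
def IsMajorizedBy {n : ℕ} (ξ χ : Fin n → ℝ) : Prop :=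
  (∀ m, m ≤ n → topSum ξ m ≤ topSum χ m) ∧ ∑ i, ξ i = ∑ i, χ i

namespace Finset

variable {ι M : Type*} [AddCommMonoid M] [LinearOrder M] [IsOrderedAddMonoid M]
  {s t : Finset ι} {f g : ι → M}

theorem sum_le_sum_of_card_eq_of_forall_le (hst : #s = #t)
    (h : ∀ i ∈ s, ∀ j ∈ t, f i ≤ g j) : ∑ i ∈ s, f i ≤ ∑ j ∈ t, g j := by
  rcases s.eq_empty_or_nonempty with rfl | hs
  · rw [card_empty, eq_comm, card_eq_zero] at hst
    simp [hst]
  obtain ⟨i₀, hi₀, hmax⟩ := s.exists_max_image f hs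
  calc ∑ i ∈ s, f i ≤ #s • f i₀ := sum_le_card_nsmul _ _ _ hmax
    _ = #t • f i₀ := by rw [hst]
    _ ≤ ∑ j ∈ t, g j := card_nsmul_le_sum _ _ _ (h i₀ hi₀)

theorem sum_le_sum_of_card_eq_of_sdiff_le [DecidableEq ι] (hst : #s = #t)
    (hinter : ∀ i ∈ s ∩ t, f i ≤ g i)
    (hsdiff : ∀ i ∈ s \ t, ∀ j ∈ t \ s, f i ≤ g j) : ∑ i ∈ s, f i ≤ ∑ j ∈ t, g j := by
  rw [← sum_inter_add_sum_sdiff s t f, ← sum_inter_add_sum_sdiff t s g, inter_comm t s]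
  exact add_le_add (sum_le_sum hinter)
    (sum_le_sum_of_card_eq_of_forall_le (card_sdiff_comm hst) hsdiff)

end Finset

open Finset

section

variable {n : ℕ}

theorem sum_le_topSum (ξ : Fin n → ℝ) {m : ℕ} {s : Finset (Fin n)} (hs : #s = m) :
    ∑ i ∈ s, ξ i ≤ topSum ξ m :=
  le_csSup ((Set.toFinite _).image _).bddAbove ⟨s, hs, rfl⟩

theorem topSum_le {ξ : Fin n → ℝ} {m : ℕ} (hm : m ≤ n) {B : ℝ}
    (h : ∀ s : Finset (Fin n), #s = m → ∑ i ∈ s, ξ i ≤ B) : topSum ξ m ≤ B := by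
  obtain ⟨t, -, ht⟩ := exists_subset_card_eq (s := (univ : Finset (Fin n))) (by simpa using hm)
  exact csSup_le ⟨_, t, ht, rfl⟩ (by rintro b ⟨s, hs, rfl⟩; exact h s hs)

theorem exists_card_eq_forall_notMem_le (ξ : Fin n → ℝ) {m : ℕ} (hm : m ≤ n) :
    ∃ s : Finset (Fin n), #s = m ∧ ∀ i ∈ s, ∀ j ∉ s, ξ j ≤ ξ i := by
  have hne : (powersetCard m (univ : Finset (Fin n))).Nonempty :=
    powersetCard_nonempty.mpr (by simpa using hm)
  obtain ⟨s, hs, hmax⟩ := exists_max_image _ (fun u => ∑ i ∈ u, ξ i) hne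
  rw [mem_powersetCard_univ] at hs
  refine ⟨s, hs, fun i hi j hj => ?_⟩
  -- otherwise swapping `i` for `j` would increase the sum over `s`
  by_contra! hlt
  have hj' : j ∉ s.erase i := fun h => hj (mem_of_mem_erase h)
  have hswap := hmax (insert j (s.erase i)) (by
    rw [mem_powersetCard_univ, card_insert_of_notMem hj', card_erase_of_mem hi, hs]
    have := card_pos.mpr ⟨i, hi⟩
    omega)
  rw [sum_insert hj', ← add_sum_erase s ξ hi] at hswap
  linarith

def initSeg (n m : ℕ) : Finset (Fin n) := {i | (i : ℕ) < m}

@[simp]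
theorem mem_initSeg {m : ℕ} {i : Fin n} : i ∈ initSeg n m ↔ (i : ℕ) < m := by
  simp [initSeg]

theorem card_initSeg {m : ℕ} (hm : m ≤ n) : #(initSeg n m) = m := by
  rw [initSeg, Fin.card_filter_val_lt, min_eq_right hm]

theorem sum_le_sum_initSeg_of_antitone {μ : Fin n → ℝ} (hμ : Antitone μ) {s : Finset (Fin n)}
    {m : ℕ} (hm : m ≤ n) (hs : #s = m) : ∑ i ∈ s, μ i ≤ ∑ i ∈ initSeg n m, μ i := by
  refine sum_le_sum_of_card_eq_of_sdiff_le (by rw [hs, card_initSeg hm])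
    (fun _ _ => le_rfl) fun i hi j hj => hμ ?_
  simp only [mem_sdiff, mem_initSeg] at hi hj
  exact Fin.le_def.mpr (by omega)

def verticalProfile (μ : Fin n → ℝ) (β : ℝ) : Fin n → ℝ :=
  fun i => μ i * min 1 (max (β + 1 - ((i : ℕ) + 1)) 0)

def horizontalProfile (μ : Fin n → ℝ) (α : ℝ) : Fin n → ℝ :=
  fun i => min α (μ i)

theorem verticalProfile_of_le {μ : Fin n → ℝ} {β : ℝ} {i : Fin n} (h : β ≤ (i : ℕ)) :
    verticalProfile μ β i = 0 := by
  rw [verticalProfile, max_eq_right (by linarith), min_eq_right zero_le_one, mul_zero]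

theorem verticalProfile_of_add_one_le {μ : Fin n → ℝ} {β : ℝ} {i : Fin n}
    (h : ((i : ℕ) : ℝ) + 1 ≤ β) : verticalProfile μ β i = μ i := by
  rw [verticalProfile, max_eq_left (by linarith), min_eq_left (by linarith), mul_one]

theorem isMajorizedBy_verticalProfile {μ ξ : Fin n → ℝ} (hμ : Antitone μ) {β : ℝ}
    (hξ0 : ∀ i, 0 ≤ ξ i) (hξμ : ∀ i, ξ i ≤ μ i) (hsum : ∑ i, ξ i = ∑ i, verticalProfile μ β i) :
    IsMajorizedBy ξ (verticalProfile μ β) := by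
  refine ⟨fun m hm => ?_, hsum⟩
  refine (topSum_le hm fun s hs => ?_).trans (sum_le_topSum _ (card_initSeg hm))
  rcases le_or_gt β m with hβm | hmβ
  · calc ∑ i ∈ s, ξ i ≤ ∑ i, ξ i := sum_le_univ_sum_of_nonneg hξ0
      _ = ∑ i, verticalProfile μ β i := hsum
      _ = ∑ i ∈ initSeg n m, verticalProfile μ β i := by
        refine (sum_subset (subset_univ _) fun i _ hi => verticalProfile_of_le ?_).symm
        rw [mem_initSeg, not_lt] at hi
        exact hβm.trans (by exact_mod_cast hi)
  · calc ∑ i ∈ s, ξ i ≤ ∑ i ∈ s, μ i := sum_le_sum fun i _ => hξμ i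
      _ ≤ ∑ i ∈ initSeg n m, μ i := sum_le_sum_initSeg_of_antitone hμ hm hs
      _ = ∑ i ∈ initSeg n m, verticalProfile μ β i := by
        refine sum_congr rfl fun i hi => (verticalProfile_of_add_one_le ?_).symm
        rw [mem_initSeg] at hi
        exact (by exact_mod_cast hi : ((i : ℕ) : ℝ) + 1 ≤ m).trans hmβ.le

theorem horizontalProfile_isMajorizedBy {μ ξ : Fin n → ℝ} {α : ℝ} (hξμ : ∀ i, ξ i ≤ μ i)
    (hsum : ∑ i, ξ i = ∑ i, horizontalProfile μ α i) :
    IsMajorizedBy (horizontalProfile μ α) ξ := by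
  refine ⟨fun m hm => ?_, hsum.symm⟩
  obtain ⟨s, hs, htop⟩ := exists_card_eq_forall_notMem_le ξ hm
  refine (topSum_le hm fun t ht => ?_).trans (sum_le_topSum ξ hs)
  by_cases hlarge : ∀ i ∈ s, α ≤ ξ i
  · exact sum_le_sum_of_card_eq_of_forall_le (by rw [ht, hs])
      fun i _ j hj => (min_le_left _ _).trans (hlarge j hj)
  push Not at hlarge
  obtain ⟨i₀, hi₀, hi₀α⟩ := hlarge
  have hsmall : ∀ i ∉ s, ξ i ≤ α := fun i hi => (htop i₀ hi₀ i hi).trans hi₀α.le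
  have hcompl : ∑ i ∈ sᶜ, ξ i ≤ ∑ i ∈ tᶜ, horizontalProfile μ α i := by
    refine sum_le_sum_of_card_eq_of_sdiff_le (by rw [card_compl, card_compl, hs, ht])
      (fun i hi => ?_) fun i hi j hj => ?_
    · have hi : i ∉ s := mem_compl.mp (mem_inter.mp hi).1
      exact le_min (hsmall i hi) (hξμ i)
    · simp only [mem_sdiff, mem_compl, not_not] at hi hj
      exact le_min (hsmall i hi.1) ((htop j hj.2 i hi.1).trans (hξμ j))
  linarith [sum_add_sum_compl s ξ, sum_add_sum_compl t (horizontalProfile μ α)]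

end

/-- Extreme vaccinations: among all effective population profiles
`ξ ∈ [0,μ_1] × ⋯ × [0,μ_n]` with a given total, the "vertical" profile
`ξ^v_i = μ_i min(1, (β+1-i)_+)` majorizes every profile and the "horizontal" profile
`ξ^h_i = min(α, μ_i)` is majorized by every profile. (Index `i : Fin n` encodes the
label `i+1 ∈ {1,…,n}`.) -/
theorem stmt7 (n : ℕ) (μ : Fin n → ℝ)
    (hmono : ∀ i j : Fin n, i ≤ j → μ j ≤ μ i)
    (β : ℝ)
    (α : ℝ)
    (ξv ξh : Fin n → ℝ)
    (hξv : ∀ i, ξv i = μ i * min 1 (max (β + 1 - ((i : ℕ) + 1)) 0))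
    (hξh : ∀ i, ξh i = min α (μ i)) :
    ∀ ξ : Fin n → ℝ, (∀ i, ξ i ∈ Set.Icc 0 (μ i)) →
      ((∑ i, ξ i = ∑ i, ξv i → IsMajorizedBy ξ ξv) ∧
        (∑ i, ξ i = ∑ i, ξh i → IsMajorizedBy ξh ξ)) := by
  intro ξ hξ
  obtain rfl : ξv = verticalProfile μ β := funext hξv
  obtain rfl : ξh = horizontalProfile μ α := funext hξh
  exact ⟨isMajorizedBy_verticalProfile (fun i j => hmono i j) (fun i => (hξ i).1)
    (fun i => (hξ i).2), horizontalProfile_isMajorizedBy fun i => (hξ i).2⟩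
end

section
/- Assume R_0 = 1, so that k^ε(x,y) = 1 + ε α(x) α(y) with ε ∈ {−1, +1}. Then for every vaccination strategy η, writing A = ∫ η dμ, B = ∫ α² η dμ and M = ∫ α η dμ, the effective reproduction number satisfies 2 R_e^ε(η) = A + εB + √((A − εB)² + 4ε M²). -/
/-!
The kernel is separable, `k^ε(x, y) η(y) = η(y) + α(x) · ε α(y) η(y)`, so `T` has rank two: it
maps `L²(μ)` into `span {1, α}` and acts there by the matrix `[[A, M], [ε M, ε B]]`. Hence
`T (T² - τ T + δ) = 0` with `τ = A + ε B`, `δ = ε (A B - M²)`, and every spectral value is `0` or a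
root of `z² - τ z + δ`. The larger root `r` has an eigenvector because `1 ⊥ α` in `L²(μ)`, and it
dominates the other root in absolute value since `τ ≥ 0` (from `α² ≤ 1`, i.e. `B ≤ A`) and the
discriminant `(A - ε B)² + 4 ε M²` is nonnegative (from `2 |M| ≤ A + B`). So the spectral radius
is `r`.
-/

open MeasureTheory

/-- `T` is the integral operator on `L²(μ)` associated with the kernel `K`:
for every `g ∈ L²(μ)`, `T g` agrees `μ`-a.e. with `x ↦ ∫ K x y * g y dμ(y)`. -/
def IsKernelOp {Ω : Type*} [MeasurableSpace Ω] (μ : Measure Ω) (K : Ω → Ω → ℝ)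
    (T : Lp ℝ 2 μ →L[ℝ] Lp ℝ 2 μ) : Prop :=
  ∀ g : Lp ℝ 2 μ, ⇑(T g) =ᵐ[μ] fun x => ∫ y, K x y * g y ∂μ

/-- The spectral radius of a bounded operator on `L²(μ)`. -/
noncomputable def rho {Ω : Type*} [MeasurableSpace Ω] {μ : Measure Ω}
    (T : Lp ℝ 2 μ →L[ℝ] Lp ℝ 2 μ) : ℝ :=
  (spectralRadius ℝ T).toReal

open Polynomial
open scoped ENNReal

theorem spectrum.isRoot_of_aeval_eq_zero {𝕜 A : Type*} [Field 𝕜] [Ring A] [Algebra 𝕜 A]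
    {a : A} {p : 𝕜[X]} (hp : aeval a p = 0) {z : 𝕜} (hz : z ∈ spectrum 𝕜 a) : p.IsRoot z := by
  rcases subsingleton_or_nontrivial A with hA | hA
  · simp [spectrum.of_subsingleton] at hz
  have := spectrum.subset_polynomial_aeval a p ⟨z, hz, rfl⟩
  rwa [hp, spectrum.zero_eq, Set.mem_singleton_iff] at this

theorem spectralRadius_eq_nnnorm_of_mem {𝕜 A : Type*} [NormedField 𝕜] [Ring A] [Algebra 𝕜 A]
    {a : A} {r : 𝕜} (hr : r ∈ spectrum 𝕜 a) (hle : ∀ z ∈ spectrum 𝕜 a, ‖z‖ ≤ ‖r‖) :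
    spectralRadius 𝕜 a = ‖r‖₊ :=
  le_antisymm (iSup₂_le fun z hz => by exact_mod_cast hle z hz)
    (le_iSup₂ (f := fun z _ => (‖z‖₊ : ENNReal)) r hr)

theorem ContinuousLinearMap.mem_spectrum_of_apply_eq_smul {𝕜 E : Type*}
    [NontriviallyNormedField 𝕜] [NormedAddCommGroup E] [NormedSpace 𝕜 E] {T : E →L[𝕜] E}
    {w : E} {r : 𝕜} (hw : w ≠ 0) (hTw : T w = r • w) : r ∈ spectrum 𝕜 T := by
  rintro ⟨U, hU⟩
  apply hw
  calc w = (U.inv * U.val) w := by rw [U.inv_val, one_apply_eq_self]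
    _ = 0 := by simp [hU, hTw, Algebra.algebraMap_eq_smul_one]

/-- The larger root of `X ^ 2 - τ X + δ`, provided `τ ^ 2 - 4 δ ≥ 0`. -/
noncomputable def largerRoot (τ δ : ℝ) : ℝ := (τ + √(τ ^ 2 - 4 * δ)) / 2

theorem largerRoot_isRoot {τ δ : ℝ} (hD : 0 ≤ τ ^ 2 - 4 * δ) :
    largerRoot τ δ ^ 2 - τ * largerRoot τ δ + δ = 0 := by
  have := Real.sq_sqrt hD
  unfold largerRoot
  linear_combination (1 / 4 : ℝ) * this

theorem abs_le_largerRoot {τ δ z : ℝ} (hτ : 0 ≤ τ) (hD : 0 ≤ τ ^ 2 - 4 * δ)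
    (hz : z ^ 2 - τ * z + δ = 0) : |z| ≤ largerRoot τ δ := by
  have hs := Real.sqrt_nonneg (τ ^ 2 - 4 * δ)
  have hroots : (z - largerRoot τ δ) * (z - (τ - largerRoot τ δ)) = 0 := by
    linear_combination hz - largerRoot_isRoot hD
  unfold largerRoot at hroots ⊢
  rcases mul_eq_zero.1 hroots with h | h <;> rw [abs_le] <;> constructor <;> linarith

section RankTwo

variable {E : Type*} [NormedAddCommGroup E] [NormedSpace ℝ E] {T : E →L[ℝ] E} {u v : E}
  {a b c d : ℝ}

theorem aeval_mul_X_eq_zero_of_rank_two (hu : T u = a • u + c • v) (hv : T v = b • u + d • v)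
    (hrange : ∀ g, T g ∈ Submodule.span ℝ {u, v}) :
    aeval T ((X ^ 2 - C (a + d) * X + C (a * d - b * c)) * X) = 0 := by
  ext g
  obtain ⟨s, t, hst⟩ := Submodule.mem_span_pair.1 (hrange g)
  simp only [map_mul, map_add, map_sub, aeval_X, aeval_C, mul_apply_eq_comp, add_apply, sub_apply,
    pow_two, Algebra.algebraMap_eq_smul_one, smul_apply, one_apply_eq_self, zero_apply, ← hst,
    map_smul, hu, hv]
  module

theorem apply_eq_smul_of_rank_two (hu : T u = a • u + c • v) (hv : T v = b • u + d • v) {r : ℝ}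
    (hr : r ^ 2 - (a + d) * r + (a * d - b * c) = 0) :
    T (b • u + (r - a) • v) = r • (b • u + (r - a) • v) := by
  rw [map_add, map_smul, map_smul, hu, hv]
  linear_combination (norm := module) (-hr) • v

theorem spectralRadius_eq_largerRoot_of_rank_two (hu : T u = a • u + c • v)
    (hv : T v = b • u + d • v) (hrange : ∀ g, T g ∈ Submodule.span ℝ {u, v})
    (htr : 0 ≤ a + d) (hD : 0 ≤ (a + d) ^ 2 - 4 * (a * d - b * c))
    (hmem : largerRoot (a + d) (a * d - b * c) ∈ spectrum ℝ T) :
    (spectralRadius ℝ T).toReal = largerRoot (a + d) (a * d - b * c) := by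
  have hr0 : 0 ≤ largerRoot (a + d) (a * d - b * c) :=
    div_nonneg (add_nonneg htr (Real.sqrt_nonneg _)) zero_le_two
  have hle : ∀ z ∈ spectrum ℝ T, ‖z‖ ≤ ‖largerRoot (a + d) (a * d - b * c)‖ := by
    intro z hz
    have hp := aeval_mul_X_eq_zero_of_rank_two hu hv hrange
    have hroot := spectrum.isRoot_of_aeval_eq_zero hp hz
    simp only [IsRoot, eval_mul, eval_add, eval_sub, eval_pow, eval_X, eval_C, mul_eq_zero] at hroot
    rw [Real.norm_eq_abs, Real.norm_eq_abs, abs_of_nonneg hr0]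
    rcases hroot with hq | rfl
    · exact abs_le_largerRoot htr hD hq
    · simpa using hr0
  rw [spectralRadius_eq_nnnorm_of_mem hmem hle, ENNReal.coe_toReal, coe_nnnorm,
    Real.norm_eq_abs, abs_of_nonneg hr0]

end RankTwo

theorem mem_spectrum_of_rank_two {E : Type*} [NormedAddCommGroup E] [InnerProductSpace ℝ E]
    {T : E →L[ℝ] E} {u v : E} {a b c d : ℝ} (hu : T u = a • u + c • v) (hv : T v = b • u + d • v)
    (hu0 : u ≠ 0) (huv : inner ℝ u v = 0) (hbc : b = 0 → c = 0) (hda : d ≤ a)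
    (hD : 0 ≤ (a + d) ^ 2 - 4 * (a * d - b * c)) :
    largerRoot (a + d) (a * d - b * c) ∈ spectrum ℝ T := by
  rcases eq_or_ne b 0 with rfl | hb
  · have hr : largerRoot (a + d) (a * d - 0 * c) = a := by
      rw [largerRoot, show (a + d) ^ 2 - 4 * (a * d - 0 * c) = (a - d) ^ 2 by ring,
        Real.sqrt_sq (sub_nonneg.2 hda)]
      ring
    rw [hr]
    exact ContinuousLinearMap.mem_spectrum_of_apply_eq_smul hu0 (by simp [hu, hbc rfl])
  · refine ContinuousLinearMap.mem_spectrum_of_apply_eq_smul ?_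
      (apply_eq_smul_of_rank_two hu hv (largerRoot_isRoot hD))
    intro hw
    have := congr_arg (inner ℝ u) hw
    simp only [inner_add_right, inner_smul_right, huv, real_inner_self_eq_norm_sq, inner_zero_right,
      mul_zero, add_zero, mul_eq_zero, hb, false_or, pow_eq_zero_iff two_ne_zero] at this
    exact hu0 (norm_eq_zero.1 this)

section KernelOperator

variable {Ω : Type*} [MeasurableSpace Ω] {μ : Measure Ω}

theorem IsKernelOp.apply_eq_of_eq_add {K : Ω → Ω → ℝ} {T : Lp ℝ 2 μ →L[ℝ] Lp ℝ 2 μ}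
    (hT : IsKernelOp μ K T) {p q r s : Ω → ℝ} (hp : MemLp p 2 μ) (hr : MemLp r 2 μ)
    (hK : ∀ x y, K x y = p x * q y + r x * s y) (g : Lp ℝ 2 μ)
    (hq : Integrable (fun y => q y * g y) μ) (hs : Integrable (fun y => s y * g y) μ) :
    T g = (∫ y, q y * g y ∂μ) • hp.toLp p + (∫ y, s y * g y ∂μ) • hr.toLp r := by
  refine Lp.ext ((hT g).trans ?_)
  filter_upwards [Lp.coeFn_add (E := ℝ) ((∫ y, q y * g y ∂μ) • hp.toLp p)
      ((∫ y, s y * g y ∂μ) • hr.toLp r),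
    Lp.coeFn_smul (∫ y, q y * g y ∂μ) (hp.toLp p), Lp.coeFn_smul (∫ y, s y * g y ∂μ) (hr.toLp r),
    hp.coeFn_toLp, hr.coeFn_toLp] with x hadd hsp hsr hpx hrx
  simp only [hK, add_mul, mul_assoc]
  rw [integral_add (hq.const_mul _) (hs.const_mul _), integral_const_mul, integral_const_mul, hadd,
    Pi.add_apply, hsp, hsr, Pi.smul_apply, Pi.smul_apply, hpx, hrx, smul_eq_mul, smul_eq_mul,
    mul_comm (p x), mul_comm (r x)]

variable [IsFiniteMeasure μ] {α η : Ω → ℝ} {ε : ℝ} {T : Lp ℝ 2 μ →L[ℝ] Lp ℝ 2 μ}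

theorem IsKernelOp.apply_eq_of_one_add_mul
    (hT : IsKernelOp μ (fun x y => (1 + ε * α x * α y) * η y) T) (hα : MemLp α 2 μ)
    (hη : MemLp η ∞ μ) (g : Lp ℝ 2 μ) :
    T g = (∫ y, η y * g y ∂μ) • Lp.const 2 μ (1 : ℝ) +
      (∫ y, ε * α y * η y * g y ∂μ) • hα.toLp α := by
  have hηg : MemLp (fun y => η y * g y) 2 μ := (Lp.memLp g).mul' hη
  exact hT.apply_eq_of_eq_add (memLp_const 1) hα (fun x y => by ring) g
    (hηg.integrable one_le_two)
    (((hα.integrable_mul hηg).const_mul ε).congr (ae_of_all _ fun y => by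
      simp only [Pi.mul_apply]; ring))

theorem IsKernelOp.apply_const_one
    (hT : IsKernelOp μ (fun x y => (1 + ε * α x * α y) * η y) T) (hα : MemLp α 2 μ)
    (hη : MemLp η ∞ μ) :
    T (Lp.const 2 μ 1) = (∫ x, η x ∂μ) • Lp.const 2 μ (1 : ℝ) +
      (ε * ∫ x, α x * η x ∂μ) • hα.toLp α := by
  have h1 := Lp.coeFn_const 2 μ (1 : ℝ)
  rw [hT.apply_eq_of_one_add_mul hα hη, ← integral_const_mul]
  congr 2 <;> exact integral_congr_ae (h1.mono fun x hx => by
    simp only [hx, Function.const_apply, mul_one, mul_assoc])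

theorem IsKernelOp.apply_toLp
    (hT : IsKernelOp μ (fun x y => (1 + ε * α x * α y) * η y) T) (hα : MemLp α 2 μ)
    (hη : MemLp η ∞ μ) :
    T (hα.toLp α) = (∫ x, α x * η x ∂μ) • Lp.const 2 μ (1 : ℝ) +
      (ε * ∫ x, α x ^ 2 * η x ∂μ) • hα.toLp α := by
  rw [hT.apply_eq_of_one_add_mul hα hη, ← integral_const_mul]
  congr 2 <;> exact integral_congr_ae (hα.coeFn_toLp.mono fun x hx => by simp [hx]; ring)

theorem L2.inner_const_one_left (f : Lp ℝ 2 μ) :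
    inner ℝ (Lp.const 2 μ (1 : ℝ)) f = ∫ x, f x ∂μ := by
  rw [← indicatorConstLp_univ, L2.inner_indicatorConstLp_one, setIntegral_univ]

theorem integral_sq_mul_le_integral (hα : MemLp α 2 μ)
    (hη : MemLp η ∞ μ) (hα1 : ∀ᵐ x ∂μ, α x ^ 2 ≤ 1) (hη0 : ∀ x, 0 ≤ η x) :
    ∫ x, α x ^ 2 * η x ∂μ ≤ ∫ x, η x ∂μ :=
  integral_mono_ae (hα.integrable_sq.mul_of_top_left hη) (hη.integrable le_top)
    (hα1.mono fun x hx => mul_le_of_le_one_left (hη0 x) hx)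

theorem two_mul_abs_integral_mul_le (hα : MemLp α 2 μ)
    (hη : MemLp η ∞ μ) (hη0 : ∀ x, 0 ≤ η x) :
    2 * |∫ x, α x * η x ∂μ| ≤ ∫ x, η x ∂μ + ∫ x, α x ^ 2 * η x ∂μ := by
  have hα2η : Integrable (fun x => α x ^ 2 * η x) μ := hα.integrable_sq.mul_of_top_left hη
  rw [← integral_add (hη.integrable le_top) hα2η, ← abs_two, ← abs_mul, ← integral_const_mul]
  refine abs_integral_le_integral_abs.trans (integral_mono_of_nonneg
    (ae_of_all _ fun _ => abs_nonneg _) ((hη.integrable le_top).add hα2η)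
    (ae_of_all _ fun x => ?_))
  simp only [abs_mul, abs_two, abs_of_nonneg (hη0 x), ← sq_abs (α x)]
  nlinarith [hη0 x, sq_nonneg (|α x| - 1)]

end KernelOperator

theorem stmt16_general (μ : Measure ℝ) [IsProbabilityMeasure μ]
    (hsupp : μ (Set.Ico (0 : ℝ) 1)ᶜ = 0)
    (α : ℝ → ℝ)
    (hαL2 : MemLp α 2 μ) (hαint : (∫ x, α x ∂μ) = 0)
    (hαbd : ∀ x ∈ Set.Ico (0 : ℝ) 1, α x ^ 2 ≤ 1)
    (ε : ℝ) (hε : ε = 1 ∨ ε = -1)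
    (η : ℝ → ℝ) (hηm : Measurable η) (hη : ∀ x, η x ∈ Set.Icc (0 : ℝ) 1)
    (T : Lp ℝ 2 μ →L[ℝ] Lp ℝ 2 μ)
    (hT : IsKernelOp μ (fun x y => (1 + ε * α x * α y) * η y) T) :
    2 * rho T =
      (∫ x, η x ∂μ) + ε * (∫ x, α x ^ 2 * η x ∂μ) +
        Real.sqrt (((∫ x, η x ∂μ) - ε * (∫ x, α x ^ 2 * η x ∂μ)) ^ 2 +
          4 * ε * (∫ x, α x * η x ∂μ) ^ 2) := by
  set A := ∫ x, η x ∂μ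
  set B := ∫ x, α x ^ 2 * η x ∂μ
  set M := ∫ x, α x * η x ∂μ
  have hη0 : ∀ x, 0 ≤ η x := fun x => (hη x).1
  have hηtop : MemLp η ∞ μ := memLp_top_of_bound hηm.aestronglyMeasurable 1
    (ae_of_all _ fun x => abs_le.2 ⟨by linarith [hη0 x], (hη x).2⟩)
  set u := Lp.const 2 μ (1 : ℝ)
  set v := hαL2.toLp α
  have hTu : T u = A • u + (ε * M) • v := hT.apply_const_one hαL2 hηtop
  have hTv : T v = M • u + (ε * B) • v := hT.apply_toLp hαL2 hηtop
  have hrange (g : Lp ℝ 2 μ) : T g ∈ Submodule.span ℝ {u, v} :=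
    hT.apply_eq_of_one_add_mul hαL2 hηtop g ▸ Submodule.mem_span_pair.2 ⟨_, _, rfl⟩
  have huu : inner ℝ u u = 1 := by
    rw [L2.inner_const_one_left, integral_congr_ae (Lp.coeFn_const 2 μ (1 : ℝ))]
    simp
  have huv : inner ℝ u v = 0 := by
    rw [L2.inner_const_one_left, integral_congr_ae hαL2.coeFn_toLp, hαint]
  have hBA := integral_sq_mul_le_integral hαL2 hηtop
    (Filter.mem_of_superset (mem_ae_iff.2 hsupp) hαbd) hη0
  have hM := two_mul_abs_integral_mul_le hαL2 hηtop hη0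
  have hB0 : 0 ≤ B := integral_nonneg fun x => mul_nonneg (sq_nonneg _) (hη0 x)
  obtain ⟨hεB, htr, hD⟩ : ε * B ≤ A ∧ 0 ≤ A + ε * B ∧
      0 ≤ (A + ε * B) ^ 2 - 4 * (A * (ε * B) - M * (ε * M)) := by
    rcases hε with rfl | rfl <;> refine ⟨?_, ?_, ?_⟩ <;>
      nlinarith [le_abs_self M, neg_abs_le M, sq_abs M]
  have hmem := mem_spectrum_of_rank_two hTu hTv (fun h => by simp [h] at huu) huv
    (fun hM0 => by rw [hM0, mul_zero]) hεB hD
  rw [rho, spectralRadius_eq_largerRoot_of_rank_two hTu hTv hrange htr hD hmem, largerRoot,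
    show (A + ε * B) ^ 2 - 4 * (A * (ε * B) - M * (ε * M)) = (A - ε * B) ^ 2 + 4 * ε * M ^ 2 by
      ring]
  ring

/-- Explicit formula for the effective reproduction number of the rank-two p-regular
kernel `k^ε(x,y) = 1 + ε α(x) α(y)` on `[0,1)`: with `A = ∫ η dμ`, `B = ∫ α² η dμ` and
`M = ∫ α η dμ`, one has `2 R_e^ε(η) = A + εB + √((A − εB)² + 4ε M²)`. -/
theorem stmt16 (μ : Measure ℝ) [IsProbabilityMeasure μ]
    (hsupp : μ (Set.Ico (0 : ℝ) 1)ᶜ = 0)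
    (hcdf_mono : StrictMonoOn (fun x => (μ (Set.Icc 0 x)).toReal) (Set.Ico (0 : ℝ) 1))
    (hcdf_cont : ContinuousOn (fun x => (μ (Set.Icc 0 x)).toReal) (Set.Ico (0 : ℝ) 1))
    (α : ℝ → ℝ) (hαm : Measurable α) (hαmono : StrictMonoOn α (Set.Ico (0 : ℝ) 1))
    (hαL2 : MemLp α 2 μ) (hαint : (∫ x, α x ∂μ) = 0)
    (hαbd : ∀ x ∈ Set.Ico (0 : ℝ) 1, α x ^ 2 ≤ 1)
    (ε : ℝ) (hε : ε = 1 ∨ ε = -1)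
    (η : ℝ → ℝ) (hηm : Measurable η) (hη : ∀ x, η x ∈ Set.Icc (0 : ℝ) 1)
    (T : Lp ℝ 2 μ →L[ℝ] Lp ℝ 2 μ)
    (hT : IsKernelOp μ (fun x y => (1 + ε * α x * α y) * η y) T) :
    2 * rho T =
      (∫ x, η x ∂μ) + ε * (∫ x, α x ^ 2 * η x ∂μ) +
        Real.sqrt (((∫ x, η x ∂μ) - ε * (∫ x, α x ^ 2 * η x ∂μ)) ^ 2 +
          4 * ε * (∫ x, α x * η x ∂μ) ^ 2) :=
  stmt16_general μ hsupp α hαL2 hαint hαbd ε hε η hηm hη T hT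
end
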